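/- arXiv:1412.1254 — 5 statements merged into one kernel-verified Lean document; each statement's English description precedes it below -/
import Mathlib

section
/- For any tree T with n nodes (n ≥ 1) and any positive integer x, there exists a set M of nodes of T with |M| ≤ 2n/x such that membership of a node v in M depends only on depth(v) mod x², and for any two nodes u, v at depths both at least x², there exists d ≤ x² such that the d-th ancestor of u and the d-th ancestor of v are both in M. -/
/-- key arithmetic helper: for `r ≤ n`, `r < x`,
`n - (n - r) % x` equals `r + x * ((n-r)/x)`. -/
lemma key_arith (x r n : ℕ) (hr : r < x) (hn : r ≤ n) :
    n - (n - r) % x = r + x * ((n - r) / x) := by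
  have h := Nat.mod_add_div (n - r) x
  omega

lemma fiber_small {V : Type*} [Fintype V] [DecidableEq V] (f : V → ℕ) (x : ℕ) (hx : 0 < x)
    (hf : ∀ v, f v < x) :
    ∃ r < x, (Finset.univ.filter fun v => f v = r).card ≤ Fintype.card V / x := by
  set N := Fintype.card V
  have hsum : (Finset.univ : Finset V).card
      = ∑ r ∈ Finset.range x, (Finset.univ.filter fun v => f v = r).card :=
    Finset.card_eq_sum_card_fiberwise (fun v _ => Finset.mem_range.mpr (hf v))
  by_contra h
  push_neg at h
  have hall : ∀ r ∈ Finset.range x, N / x + 1 ≤ (Finset.univ.filter fun v => f v = r).card := by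
    intro r hr
    exact (h r (Finset.mem_range.mp hr))
  have hge : x * (N / x + 1) ≤ ∑ r ∈ Finset.range x, (Finset.univ.filter fun v => f v = r).card := by
    calc x * (N / x + 1) = ∑ _r ∈ Finset.range x, (N / x + 1) := by
          rw [Finset.sum_const, Finset.card_range]; ring
      _ ≤ _ := Finset.sum_le_sum hall
  have hN : (Finset.univ : Finset V).card = N := rfl
  have hmd := Nat.div_add_mod N x
  have hx1 : x * (N / x + 1) = x * (N / x) + x := by ring
  have hc : N % x < x := Nat.mod_lt _ hx
  omega

/-- depth of iterated ancestor. -/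
lemma anc_depth {V : Type*} (parent : V → V) (depth : V → ℕ)
    (hdepth : ∀ v, depth v ≠ 0 → depth (parent v) = depth v - 1) :
    ∀ d v, d ≤ depth v → depth (parent^[d] v) = depth v - d := by
  intro d
  induction d with
  | zero => intro v _; simp
  | succ d ih =>
    intro v hv
    rw [Function.iterate_succ_apply]
    have h1 : depth (parent v) = depth v - 1 := hdepth v (by omega)
    have := ih (parent v) (by omega)
    omega

/-- Difference covers for trees (Lemma 1).  A rooted tree with node set `V` is
given by a `parent` function and a `depth` function (depth of the root is `0`,
the parent of the root is itself, and `parent` decreases depth by one).  The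
`d`-th ancestor of `v` is `parent^[d] v`. -/
theorem stmt3 {V : Type*} [Fintype V] [DecidableEq V] [Nonempty V]
    (parent : V → V) (depth : V → ℕ)
    (hdepth : ∀ v, depth v ≠ 0 → depth (parent v) = depth v - 1)
    (hroot : ∀ v, depth v = 0 → parent v = v)
    (x : ℕ) (hx : 0 < x) :
    ∃ M : Finset V,
      M.card ≤ 2 * Fintype.card V / x ∧
      (∀ u v : V, depth u % x ^ 2 = depth v % x ^ 2 → (u ∈ M ↔ v ∈ M)) ∧
      (∀ u v : V, x ^ 2 ≤ depth u → x ^ 2 ≤ depth v →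
        ∃ d ≤ x ^ 2, parent^[d] u ∈ M ∧ parent^[d] v ∈ M) := by
  obtain ⟨r₁, hr₁, hc₁⟩ := fiber_small (fun v => depth v % x) x hx (fun v => Nat.mod_lt _ hx)
  obtain ⟨r₂, hr₂, hc₂⟩ := fiber_small (fun v => (depth v / x) % x) x hx
    (fun v => Nat.mod_lt _ hx)
  set N := Fintype.card V
  have hxx : x * x = x ^ 2 := (sq x).symm
  have hexp : (x - 1) * x + x = x * x := by
    cases x with
    | zero => omega
    | succ n => simp [Nat.succ_sub_one]; ring
  refine ⟨Finset.univ.filter (fun v => depth v % x = r₁ ∨ (depth v / x) % x = r₂), ?_, ?_, ?_⟩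
  · -- cardinality
    have hsub : Finset.univ.filter (fun v : V => depth v % x = r₁ ∨ (depth v / x) % x = r₂)
        ⊆ (Finset.univ.filter fun v : V => depth v % x = r₁)
          ∪ (Finset.univ.filter fun v : V => (depth v / x) % x = r₂) := by
      intro v hv
      simp only [Finset.mem_filter, Finset.mem_union, Finset.mem_univ, true_and] at *
      exact hv
    have h1 := Finset.card_le_card hsub
    have h2 := Finset.card_union_le (Finset.univ.filter fun v : V => depth v % x = r₁)
      (Finset.univ.filter fun v : V => (depth v / x) % x = r₂)
    have h3 : N / x + N / x ≤ 2 * N / x := by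
      rw [Nat.le_div_iff_mul_le hx]
      have ha : (N / x + N / x) * x = 2 * (N / x * x) := by ring
      have hb : N / x * x ≤ N := Nat.div_mul_le_self N x
      omega
    omega
  · -- depends only on depth mod x²
    intro u v h
    have e1 : ∀ n : ℕ, n % x = (n % x ^ 2) % x := fun n =>
      (Nat.mod_mod_of_dvd n ⟨x, (sq x)⟩).symm
    have e2 : ∀ n : ℕ, (n / x) % x = n % x ^ 2 / x := fun n => by
      rw [← Nat.mod_mul_right_div_self, ← sq]
    have a1 : depth u % x = depth v % x := by rw [e1 (depth u), e1 (depth v), h]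
    have a2 : (depth u / x) % x = (depth v / x) % x := by
      rw [e2 (depth u), e2 (depth v), h]
    simp only [Finset.mem_filter, Finset.mem_univ, true_and, a1, a2]
  · -- cover property
    intro u v hu hv
    set p := depth u with hp
    set q := depth v with hq
    set d₀ := (p - r₁) % x with hd₀def
    have hd₀lt : d₀ < x := Nat.mod_lt _ hx
    have hr₁p : r₁ ≤ p := by omega
    have hu1 : p - d₀ = r₁ + x * ((p - r₁) / x) := key_arith x r₁ p hr₁ hr₁p
    set b := q - d₀ with hbdef
    have hbge : x * x < b + x := by omega
    set m := b / x with hmdef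
    have hbm := Nat.mod_add_div b x
    have hbmodlt : b % x < x := Nat.mod_lt _ hx
    have hmge : x - 1 ≤ m := by
      rw [hmdef, Nat.le_div_iff_mul_le hx]
      omega
    have hr₂m : r₂ ≤ m := by omega
    set k := (m - r₂) % x with hkdef
    have hklt : k < x := Nat.mod_lt _ hx
    have hk : m - k = r₂ + x * ((m - r₂) / x) := key_arith x r₂ m hr₂ hr₂m
    have hkx : k * x ≤ (x - 1) * x := Nat.mul_le_mul_right x (by omega)
    set d := d₀ + k * x with hddef
    have hdltx2 : d < x ^ 2 := by omega
    refine ⟨d, by omega, ?_, ?_⟩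
    · -- ancestor of u : (p - d) % x = r₁
      have hdp : d ≤ p := by omega
      have hda := anc_depth parent depth hdepth d u hdp
      simp only [Finset.mem_filter, Finset.mem_univ, true_and, hda]
      left
      have hquot : k ≤ (p - r₁) / x := by
        rw [Nat.le_div_iff_mul_le hx]
        omega
      have hms : x * ((p - r₁) / x - k) + x * k = x * ((p - r₁) / x) := by
        rw [← Nat.mul_add]; congr 1; omega
      have hxk : x * k = k * x := Nat.mul_comm x k
      have hgoal : p - d = r₁ + x * ((p - r₁) / x - k) := by omega
      rw [← hp, hgoal, Nat.add_mul_mod_self_left, Nat.mod_eq_of_lt hr₁]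
    · -- ancestor of v : ((q - d)/x) % x = r₂
      have hdq : d ≤ q := by omega
      have hda := anc_depth parent depth hdepth d v hdq
      simp only [Finset.mem_filter, Finset.mem_univ, true_and, hda]
      right
      clear_value d k m b d₀ q p
      have hkm : k ≤ m := by omega
      have hxk2 : x * k = k * x := Nat.mul_comm x k
      have hms : x * (m - k) + x * k = x * m := by
        rw [← Nat.mul_add]; congr 1; omega
      rw [← hmdef] at hbm
      have hb2 : b = b % x + x * (m - k) + x * k := by
        rw [Nat.add_assoc, hms, hbm]
      have hqd : q - d = b - k * x := by
        rw [hddef, hbdef, Nat.sub_sub]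
      have hsplit : q - d = b % x + x * (m - k) := by
        clear hkdef hd₀def hmdef hb2
        omega
      have hdiv : (q - d) / x = m - k := by
        rw [hsplit, Nat.add_mul_div_left _ _ hx,
          Nat.div_eq_of_lt hbmodlt, Nat.zero_add]
      rw [← hq, hdiv, hk, Nat.add_mul_mod_self_left, Nat.mod_eq_of_lt hr₂]
end

section
/- Let S and T be two strings of equal length ℓ with 2^k ≤ ℓ < 2^{k+1}. Then lcp(S,T) can be computed from the lcp of the length-2^k prefixes and the lcp of the length-2^k suffixes of S and T: if the prefixes of length 2^k of S and T differ, then lcp(S,T) equals the lcp of these two prefixes; otherwise lcp(S,T) = (ℓ - 2^k) + lcp(S', T'), where S' and T' are the suffixes of S and T of length 2^k. -/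
/-- Length of the longest common prefix of two strings. -/
def lcp {α : Type*} [DecidableEq α] : List α → List α → ℕ
  | a :: s, b :: t => if a = b then lcp s t + 1 else 0
  | _, _ => 0

theorem lcp_take_ne {α : Type*} [DecidableEq α] : ∀ (n : ℕ) (S T : List α),
    S.take n ≠ T.take n → lcp S T = lcp (S.take n) (T.take n)
  | 0, S, T, h => absurd rfl h
  | n+1, [], [], h => absurd rfl h
  | n+1, [], b::t, _ => rfl
  | n+1, a::s, [], _ => rfl
  | n+1, a::s, b::t, h => by
    by_cases hab : a = b
    · simp only [List.take, hab, ne_eq, List.cons.injEq, true_and] at h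
      simp only [List.take, lcp, hab, if_true]
      rw [lcp_take_ne n s t h]
    · simp [List.take, lcp, hab]

theorem lcp_drop_eq {α : Type*} [DecidableEq α] : ∀ (m : ℕ) (S T : List α),
    S.take m = T.take m → m ≤ S.length → m ≤ T.length →
    lcp S T = m + lcp (S.drop m) (T.drop m)
  | 0, S, T, _, _, _ => by simp
  | m+1, [], _, _, hs, _ => by simp at hs
  | m+1, _::_, [], _, _, ht => by simp at ht
  | m+1, a::s, b::t, h, hs, ht => by
    simp only [List.take, List.cons.injEq] at h
    simp only [lcp, h.1, if_true, List.drop]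
    rw [lcp_drop_eq m s t h.2 (by simpa using hs) (by simpa using ht)]
    omega

/-- Query reduction for strings of equal length `ℓ` with `2^k ≤ ℓ < 2^(k+1)`
(Lemma 2): if the length-`2^k` prefixes differ, the LCE is the LCE of those
prefixes; otherwise it is `ℓ - 2^k` plus the LCE of the length-`2^k` suffixes. -/
theorem stmt7 {α : Type*} [DecidableEq α] (S T : List α) (ℓ k : ℕ)
    (hS : S.length = ℓ) (hT : T.length = ℓ)
    (h1 : 2 ^ k ≤ ℓ) (h2 : ℓ < 2 ^ (k + 1)) :
    (S.take (2 ^ k) ≠ T.take (2 ^ k) →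
      lcp S T = lcp (S.take (2 ^ k)) (T.take (2 ^ k))) ∧
    (S.take (2 ^ k) = T.take (2 ^ k) →
      lcp S T = (ℓ - 2 ^ k) + lcp (S.drop (ℓ - 2 ^ k)) (T.drop (ℓ - 2 ^ k))) := by
  refine ⟨fun h => lcp_take_ne _ S T h, fun h => ?_⟩
  have hm : ℓ - 2 ^ k ≤ 2 ^ k := by
    have : 2 ^ (k+1) = 2 ^ k + 2 ^ k := by ring
    omega
  have htk : S.take (ℓ - 2 ^ k) = T.take (ℓ - 2 ^ k) := by
    have := congrArg (List.take (ℓ - 2 ^ k)) h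
    simpa [List.take_take, Nat.min_eq_left hm] using this
  exact lcp_drop_eq _ S T htk (by omega) (by omega)
end

section
/- Given a full binary trie on all binary strings of length L (leaves corresponding to integers in [0, 2^L)) and a binary trie containing the binary expansions (of length L) of a set S ⊆ [0, 2^L), a predecessor query for x in S reduces to: navigating the trie of S according to the bits of x as long as possible, ending at node u; then (1) if u is a leaf, x ∈ S; (2) if the next bit of x is 0 and u has no left child, the predecessor of x is the predecessor of the minimum element in the right subtree of u; (3) if the next bit of x is 1 and u has no right child, the predecessor of x is the maximum element in the left subtree of u. Prove case (3): if the search from the root of the trie of S following the bits of x ends at u because the next bit is 1 and u has no right child, then the predecessor of x in S equals the largest element of S whose binary expansion passes through the left child of u. -/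
/-- Correctness of case (3) of the trie-based predecessor search (Theorem 3).
Elements of `S ⊆ [0, 2^L)` are identified with their `L`-bit binary expansions
(most significant bit first); the trie node at depth `m` on the search path of
`x` is the prefix `x / 2^(L-m)`.  Hypotheses: the search following the bits of
`x` reaches depth `m` (some `y ∈ S` shares the first `m` bits of `x`), the next
bit of `x` is `1`, and no element of `S` shares the first `m+1` bits of `x`
(the node has no right child).  Conclusion: the predecessor of `x` in `S`
equals the largest element of `S` whose expansion passes through the left
child of that node (i.e. whose first `m+1` bits are `2·(x / 2^(L-m))`). -/
theorem stmt14 (L m x : ℕ) (S : Finset ℕ)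
    (hS : ∀ y ∈ S, y < 2 ^ L) (hx : x < 2 ^ L) (hm : m < L)
    (hu : ∃ y ∈ S, y / 2 ^ (L - m) = x / 2 ^ (L - m))
    (hbit : x / 2 ^ (L - (m + 1)) % 2 = 1)
    (hnoright : ∀ y ∈ S, y / 2 ^ (L - (m + 1)) ≠ x / 2 ^ (L - (m + 1))) :
    ∃ (hLft : (S.filter (fun y => y / 2 ^ (L - (m + 1)) = 2 * (x / 2 ^ (L - m)))).Nonempty)
      (hPred : (S.filter (fun y => y ≤ x)).Nonempty),
      (S.filter (fun y => y ≤ x)).max' hPred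
        = (S.filter (fun y => y / 2 ^ (L - (m + 1)) = 2 * (x / 2 ^ (L - m)))).max' hLft := by
  obtain ⟨y, hyS, hy⟩ := hu
  set k := L - (m + 1) with hk
  have hkm : L - m = k + 1 := by omega
  rw [hkm] at hy ⊢
  set q := x / 2 ^ (k + 1) with hq
  have hdd : ∀ a : ℕ, a / 2 ^ (k + 1) = a / 2 ^ k / 2 := by
    intro a
    rw [pow_succ, Nat.div_div_eq_div_mul]
  have hxk : x / 2 ^ k = 2 * q + 1 := by
    have h1 := hdd x
    omega
  have hyk : y / 2 ^ k = 2 * q := by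
    have h1 := hdd y
    have h2 := hnoright y hyS
    rw [hy] at h1
    omega
  have mono : ∀ a b : ℕ, a / 2 ^ k < b / 2 ^ k → a < b := by
    intro a b h
    by_contra hab
    exact absurd (Nat.div_le_div_right (Nat.le_of_not_lt hab)) (Nat.not_le_of_lt h)
  have hylt : y < x := mono y x (by omega)
  have hLft : (S.filter (fun y => y / 2 ^ k = 2 * q)).Nonempty :=
    ⟨y, Finset.mem_filter.2 ⟨hyS, hyk⟩⟩
  have hPred : (S.filter (fun y => y ≤ x)).Nonempty :=
    ⟨y, Finset.mem_filter.2 ⟨hyS, hylt.le⟩⟩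
  refine ⟨hLft, hPred, le_antisymm ?_ ?_⟩
  · -- max of predecessors is in left subtree
    set a := (S.filter (fun y => y ≤ x)).max' hPred with ha
    have haS : a ∈ S ∧ a ≤ x := Finset.mem_filter.1 ((S.filter _).max'_mem hPred)
    have hak : a / 2 ^ k ≤ x / 2 ^ k := Nat.div_le_div_right haS.2
    have hane : a / 2 ^ k ≠ 2 * q + 1 := by
      have := hnoright a haS.1
      omega
    have hay : y ≤ a := Finset.le_max' (S.filter (fun y => y ≤ x)) y (Finset.mem_filter.2 ⟨hyS, hylt.le⟩)
    have hya : y / 2 ^ k ≤ a / 2 ^ k := Nat.div_le_div_right hay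
    have : a / 2 ^ k = 2 * q := by omega
    exact Finset.le_max' (S.filter (fun y => y / 2 ^ k = 2 * q)) a (Finset.mem_filter.2 ⟨haS.1, this⟩)
  · -- max of left subtree is a predecessor
    set b := (S.filter (fun y => y / 2 ^ k = 2 * q)).max' hLft with hb
    have hbS : b ∈ S ∧ b / 2 ^ k = 2 * q := Finset.mem_filter.1 ((S.filter _).max'_mem hLft)
    have hblt : b < x := mono b x (by omega)
    exact Finset.le_max' (S.filter (fun y => y ≤ x)) b (Finset.mem_filter.2 ⟨hbS.1, hblt.le⟩)
end

section
/- Given a family of sets S₁, ..., S_k over a universe U, construct a rooted tree T with root r, one child vᵢ of r per set Sᵢ, and for each e ∈ Sᵢ a child of vᵢ via an edge labeled e. Then for any i, j: the tree-tree LCE of vᵢ and vⱼ (the maximum over pairs of downward paths from vᵢ and vⱼ of the length of the longest common matching prefix) equals 1 if Sᵢ ∩ Sⱼ ≠ ∅ and 0 otherwise. -/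
/-- The strings spelled by downward paths from the node `vᵢ` in the tree built
in the set-intersection reduction (root `r`, a child `vᵢ` of `r` for each set
`Sᵢ`, and for each `e ∈ Sᵢ` a child of `vᵢ` via an edge labeled `e`): the empty
string and the one-letter strings `[e]`, `e ∈ Sᵢ`. -/
def downStrings {U : Type*} (S : Finset U) : Set (List U) :=
  {[]} ∪ {t | ∃ e ∈ S, t = [e]}

/-- Set-intersection hardness reduction (Theorem 4): in the constructed tree,
the tree-tree LCE of `vᵢ` and `vⱼ` — the maximum length of a string spelled
both by a downward path from `vᵢ` and by one from `vⱼ` — is `1` if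
`Sᵢ ∩ Sⱼ ≠ ∅` and `0` otherwise. -/
theorem stmt15 {U : Type*} [DecidableEq U] (S₁ S₂ : Finset U) :
    sSup {ℓ : ℕ | ∃ s : List U, s.length = ℓ ∧
        s ∈ downStrings S₁ ∧ s ∈ downStrings S₂}
      = if (S₁ ∩ S₂).Nonempty then 1 else 0 := by
  have hle : ∀ ℓ ∈ {ℓ : ℕ | ∃ s : List U, s.length = ℓ ∧
      s ∈ downStrings S₁ ∧ s ∈ downStrings S₂}, ℓ ≤ 1 := by
    rintro ℓ ⟨s, rfl, hs1, _⟩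
    rcases hs1 with h | ⟨e, _, rfl⟩ <;> simp_all
  split_ifs with h
  · obtain ⟨e, he⟩ := h
    simp only [Finset.mem_inter] at he
    apply le_antisymm
    · exact csSup_le ⟨0, ⟨[], rfl, Or.inl rfl, Or.inl rfl⟩⟩ hle
    · exact le_csSup ⟨1, hle⟩ ⟨[e], rfl, Or.inr ⟨e, he.1, rfl⟩, Or.inr ⟨e, he.2, rfl⟩⟩
  · apply le_antisymm
    · refine csSup_le ⟨0, ⟨[], rfl, Or.inl rfl, Or.inl rfl⟩⟩ ?_
      rintro ℓ ⟨s, rfl, hs1, hs2⟩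
      rcases hs1 with h1 | ⟨e, he1, rfl⟩
      · simp_all
      · rcases hs2 with h2 | ⟨f, hf2, hef⟩
        · simp_all
        · injection hef with h1 _
          subst h1
          exact absurd ⟨e, Finset.mem_inter.2 ⟨he1, hf2⟩⟩ h
    · exact Nat.zero_le _
end

section
/- Let T be a rooted tree with n > 1 nodes and let τ ≥ 1. Then there exists a cluster partition CS of T such that |CS| = O(τ) and every cluster C ∈ CS satisfies |V(C)| = O(n/τ). Concretely: there exist constants c₁, c₂ such that T admits a set of connected subgraphs, each with at least one edge and at most two boundary nodes, whose vertex sets cover V(T), whose edge sets partition E(T), with at most c₁·τ clusters each having at most c₂·n/τ vertices. -/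
/-- The vertex set of a cluster, given by its edge set `C`. -/
def cverts {V : Type*} (C : Set (Sym2 V)) : Set V := {v | ∃ e ∈ C, v ∈ e}

/-- The boundary nodes of a cluster `C` of a graph `G`: vertices of `C`
adjacent in `G` to a vertex outside `C`. -/
def cboundary {V : Type*} (G : SimpleGraph V) (C : Set (Sym2 V)) : Set V :=
  {v | v ∈ cverts C ∧ ∃ w, G.Adj v w ∧ w ∉ cverts C}

open SimpleGraph Finset

section Prelim

variable {V : Type} (G : SimpleGraph V)

/-- `G` with vertex `r` isolated (all incident edges removed). -/
def Gdel (r : V) : SimpleGraph V where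
  Adj a b := G.Adj a b ∧ a ≠ r ∧ b ≠ r
  symm := ⟨by intro a b h; exact ⟨h.1.symm, h.2.2, h.2.1⟩⟩
  loopless := ⟨by intro a h; exact h.1.ne rfl⟩

lemma gdel_le (r : V) : Gdel G r ≤ G := by intro a b h; exact h.1

lemma gdel_not_mem_support {r : V} :
    ∀ {a b : V} (p : (Gdel G r).Walk a b), a ≠ r → r ∉ p.support := by
  intro a b p
  induction p with
  | nil =>
    intro ha
    simp only [Walk.support_nil, List.mem_singleton]
    exact fun h => ha h.symm
  | cons h q ih =>
    intro ha hmem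
    rw [Walk.support_cons] at hmem
    rcases List.mem_cons.mp hmem with h1 | h2
    · exact ha h1.symm
    · exact ih h.2.2 h2

lemma tree_sep (hG : G.IsTree) {r c c' : V} (h1 : G.Adj r c) (h2 : G.Adj r c')
    (hne : c ≠ c') : ¬ (Gdel G r).Reachable c c' := by
  classical
  intro hr
  obtain ⟨w⟩ := hr
  set p := w.toPath with hp
  have hsup : r ∉ p.1.support := gdel_not_mem_support G p.1 h1.ne'
  have hedges : ∀ e ∈ p.1.edges, e ∈ G.edgeSet := fun e he =>
    edgeSet_mono (gdel_le G r) (p.1.edges_subset_edgeSet he)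
  set q := p.1.transfer G hedges with hq
  have hqP : q.IsPath := p.2.transfer _
  have hqs : q.support = p.1.support := Walk.support_transfer _ _
  have hP1 : (Walk.cons h1 q).IsPath := hqP.cons (by rw [hqs]; exact hsup)
  have hun := hG.IsAcyclic.path_unique ⟨Walk.cons h1 q, hP1⟩ (Path.singleton h2)
  have h3 := congrArg (fun (P : G.Path r c') => P.1.support) hun
  simp only [Walk.support_cons, Path.singleton] at h3
  rw [Walk.support_nil] at h3
  have h4 : q.support = [c'] := List.tail_eq_of_cons_eq h3
  rw [Walk.support_eq_cons] at h4
  exact hne (List.head_eq_of_cons_eq h4)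

lemma mem_cverts {C : Set (Sym2 V)} {v : V} : v ∈ cverts C ↔ ∃ e ∈ C, v ∈ e := Iff.rfl

lemma cverts_mono {A B : Set (Sym2 V)} (h : A ⊆ B) : cverts A ⊆ cverts B := by
  rintro v ⟨e, he, hv⟩; exact ⟨e, h he, hv⟩

lemma cverts_union (A B : Set (Sym2 V)) : cverts (A ∪ B) = cverts A ∪ cverts B := by
  ext v; simp only [cverts, Set.mem_union, Set.mem_setOf_eq]; aesop

lemma cverts_empty : cverts (∅ : Set (Sym2 V)) = ∅ := by
  ext v; simp [cverts]

lemma edge_decomp {v : V} {e : Sym2 V} (hv : v ∈ e) : ∃ w, e = s(v, w) := by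
  induction e using Sym2.ind with
  | _ a b =>
    rcases Sym2.mem_iff.mp hv with rfl | rfl
    exacts [⟨b, rfl⟩, ⟨a, Sym2.eq_swap⟩]

lemma cverts_ncard_le [Fintype V] (C : Finset (Sym2 V)) :
    (cverts (C : Set (Sym2 V))).ncard ≤ 2 * C.card := by
  classical
  induction C using Finset.induction with
  | empty => simp [cverts_empty]
  | @insert e C he ih =>
    obtain ⟨x, y, rfl⟩ : ∃ x y, e = s(x, y) := by
      induction e using Sym2.ind with | _ x y => exact ⟨x, y, rfl⟩
    have hset : cverts ((insert s(x,y) C : Finset (Sym2 V)) : Set (Sym2 V)) =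
        {x, y} ∪ cverts (C : Set (Sym2 V)) := by
      ext v
      simp only [cverts, Finset.coe_insert, Set.mem_setOf_eq, Set.mem_union,
        Set.mem_insert_iff, Set.mem_singleton_iff]
      constructor
      · rintro ⟨e', he', hv⟩
        rcases Set.mem_insert_iff.mp he' with rfl | hmem
        · rcases Sym2.mem_iff.mp hv with rfl | rfl
          · exact Or.inl (Or.inl rfl)
          · exact Or.inl (Or.inr rfl)
        · exact Or.inr ⟨e', hmem, hv⟩
      · rintro ((rfl | rfl) | ⟨e', he', hv⟩)
        · exact ⟨s(v, y), Set.mem_insert _ _, by simp⟩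
        · exact ⟨s(x, v), Set.mem_insert _ _, by simp⟩
        · exact ⟨e', Set.mem_insert_iff.mpr (Or.inr he'), hv⟩
    rw [hset, Finset.card_insert_of_notMem he]
    calc ({x, y} ∪ cverts (C : Set (Sym2 V))).ncard
        ≤ ({x, y} : Set V).ncard + (cverts (C : Set (Sym2 V))).ncard :=
          Set.ncard_union_le _ _
      _ ≤ 2 + 2 * C.card := by
          gcongr
          · calc ({x, y} : Set V).ncard ≤ ({y} : Set V).ncard + 1 := Set.ncard_insert_le _ _
              _ ≤ 2 := by simp [Set.ncard_singleton]
      _ ≤ 2 * (C.card + 1) := by ring_nf; omega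

end Prelim

section Main

variable {V : Type} [Fintype V] {G : SimpleGraph V}

/-- All `G`-neighbours of `v` are vertices of the edge set `C`. -/
def ACl (G : SimpleGraph V) (C : Finset (Sym2 V)) (v : V) : Prop :=
  ∀ w, G.Adj v w → w ∈ cverts (C : Set (Sym2 V))

lemma ACl.mono {C C' : Finset (Sym2 V)} {v : V} (h : ACl G C v) (hCC : C ⊆ C') :
    ACl G C' v := fun w hw => cverts_mono (by exact_mod_cast hCC) (h w hw)

/-- A pendant subtree: the edge set of a subtree hanging at `r`. -/
structure Pend (G : SimpleGraph V) (E₀ : Finset (Sym2 V)) (r : V) : Prop where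
  sub : ∀ e ∈ E₀, e ∈ G.edgeSet
  conn : ∀ u ∈ cverts (E₀ : Set (Sym2 V)), (fromEdgeSet (E₀ : Set (Sym2 V))).Reachable u r
  closed : ∀ v ∈ cverts (E₀ : Set (Sym2 V)), v ≠ r → ∀ w, G.Adj v w → s(v, w) ∈ E₀

/-- The result data of the recursive clustering of a pendant subtree. -/
structure Res (G : SimpleGraph V) (s : ℕ) (E₀ : Finset (Sym2 V)) (r : V)
    (CS : Finset (Finset (Sym2 V))) (R : Finset (Sym2 V)) : Prop where
  RsubE : R ⊆ E₀
  CsubE : ∀ C ∈ CS, C ⊆ E₀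
  cover : ∀ e ∈ E₀, e ∈ R ∨ ∃ C ∈ CS, e ∈ C
  disjR : ∀ C ∈ CS, Disjoint C R
  disjC : ∀ C₁ ∈ CS, ∀ C₂ ∈ CS, C₁ ≠ C₂ → Disjoint C₁ C₂
  clNe : ∀ C ∈ CS, C.Nonempty
  clCard : ∀ C ∈ CS, C.card ≤ 2 * s
  clConn : ∀ C ∈ CS, ∀ u ∈ cverts (C : Set (Sym2 V)), ∀ v ∈ cverts (C : Set (Sym2 V)),
      (fromEdgeSet (C : Set (Sym2 V))).Reachable u v
  clBnd : ∀ C ∈ CS, ∃ x y, ∀ v ∈ cverts (C : Set (Sym2 V)), v ≠ x → v ≠ y → ACl G C v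
  Rcard : R.card < s
  Rconn : ∀ u ∈ cverts (R : Set (Sym2 V)), (fromEdgeSet (R : Set (Sym2 V))).Reachable u r
  Rbnd : ∃ x, ∀ v ∈ cverts (R : Set (Sym2 V)), v ≠ r → v ≠ x → ACl G R v
  flag : (∀ w, G.Adj r w → s(r, w) ∈ E₀ → s(r, w) ∈ R) ∨
      ((∀ v ∈ cverts (R : Set (Sym2 V)), v ≠ r → ACl G R v) ∧ CS.Nonempty)
  cnt : CS = ∅ ∨ CS.card + 2 ≤ 3 * (CS.filter (fun C => s ≤ C.card)).card

lemma res_base {s : ℕ} (hs : 1 ≤ s) (r : V) :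
    Res G s (∅ : Finset (Sym2 V)) r ∅ ∅ := by
  have hc : cverts (((∅:Finset (Sym2 V))) : Set (Sym2 V)) = ∅ := by
    rw [Finset.coe_empty]; exact cverts_empty
  exact ⟨by simp, by simp, by simp, by simp, by simp, by simp, by simp,
    by simp [hc], by simp [hc], hs, by simp [hc, cverts_empty], ⟨r, by simp [hc, cverts_empty]⟩,
    Or.inl (by simp), Or.inl rfl⟩

lemma rec_main (hG : G.IsTree) {s : ℕ} (hs : 1 ≤ s) :
    ∀ (N : ℕ) (E₀ : Finset (Sym2 V)) (r : V), E₀.card ≤ N → Pend G E₀ r →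
    ∃ CS R, Res G s E₀ r CS R := by
  classical
  intro N
  induction N with
  | zero =>
    intro E₀ r hc _
    have : E₀ = ∅ := Finset.card_eq_zero.mp (Nat.le_zero.mp hc)
    subst this
    exact ⟨∅, ∅, res_base hs r⟩
  | succ N IH =>
    intro E₀ r hcard hP
    by_cases hne : E₀ = ∅
    · subst hne; exact ⟨∅, ∅, res_base hs r⟩
    -- find an `r`-incident edge in `E₀`
    obtain ⟨c, hrc, he⟩ : ∃ c, G.Adj r c ∧ s(r, c) ∈ E₀ := by
      obtain ⟨e₀, he₀⟩ := Finset.nonempty_iff_ne_empty.mpr hne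
      obtain ⟨x, y, rfl⟩ : ∃ x y, e₀ = s(x, y) := by
        induction e₀ using Sym2.ind with | _ x y => exact ⟨x, y, rfl⟩
      have hx : x ∈ cverts (E₀ : Set (Sym2 V)) := ⟨s(x,y), he₀, by simp⟩
      by_cases hxr : x = r
      · subst hxr
        exact ⟨y, (G.mem_edgeSet).mp (hP.sub _ he₀), he₀⟩
      · obtain ⟨p⟩ := (hP.conn x hx).symm
        cases p with
        | nil => exact absurd rfl hxr
        | @cons _ w _ hadj q =>
          rw [fromEdgeSet_adj] at hadj
          have hmem : s(r, w) ∈ E₀ := by exact_mod_cast hadj.1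
          exact ⟨w, (G.mem_edgeSet).mp (hP.sub _ hmem), hmem⟩
    have hcr : c ≠ r := hrc.ne'
    set H := Gdel G r with hH
    set D : Finset (Sym2 V) :=
      E₀.filter (fun e' => (r ∉ e') ∧ ∀ v ∈ e', H.Reachable c v) with hDdef
    have hD : ∀ e', e' ∈ D ↔ e' ∈ E₀ ∧ r ∉ e' ∧ ∀ v ∈ e', H.Reachable c v := by
      intro e'; simp [hDdef]
    set E₁ : Finset (Sym2 V) := E₀ \ insert (s(r,c)) D with hE₁def
    have heD : s(r,c) ∉ D := by
      intro h
      exact ((hD _).mp h).2.1 (by simp)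
    have hDE : D ⊆ E₀ := Finset.filter_subset _ _
    have hrD : r ∉ cverts (D : Set (Sym2 V)) := by
      rintro ⟨e', he', hv⟩
      exact ((hD e').mp (by exact_mod_cast he')).2.1 hv
    have hreachD : ∀ v ∈ cverts (D : Set (Sym2 V)), H.Reachable c v := by
      rintro v ⟨e', he', hv⟩
      exact ((hD e').mp (by exact_mod_cast he')).2.2 v hv
    have hsep : ∀ v, H.Reachable c v → G.Adj r v → v = c := by
      intro v hv hadj
      by_contra hvc
      exact tree_sep G hG hrc hadj (fun h => hvc h.symm) hv
    have hCmem : c ∈ cverts (E₀ : Set (Sym2 V)) := ⟨s(r,c), he, by simp⟩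
    have hedgeD : ∀ v, H.Reachable c v → v ∈ cverts (E₀ : Set (Sym2 V)) → v ≠ r →
        ∀ w, w ≠ r → G.Adj v w → s(v, w) ∈ D := by
      intro v hv hvE hvr w hwr hadj
      have hE : s(v,w) ∈ E₀ := hP.closed v hvE hvr w hadj
      rw [hD]
      refine ⟨hE, ?_, ?_⟩
      · intro hmem
        rcases Sym2.mem_iff.mp hmem with h | h
        · exact hvr h.symm
        · exact hwr h.symm
      · intro z hz
        rcases Sym2.mem_iff.mp hz with rfl | rfl
        · exact hv
        · exact hv.trans (SimpleGraph.Adj.reachable ⟨hadj, hvr, hwr⟩)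
    have keyD : ∀ (x u : V) (p : H.Walk x u), H.Reachable c x →
        x ∈ cverts (E₀ : Set (Sym2 V)) →
        (fromEdgeSet (D : Set (Sym2 V))).Reachable x u := by
      intro x u p
      induction p with
      | nil => intro _ _; exact Reachable.refl _
      | @cons x y u hadj q ih =>
        intro hcx hxE
        have hxy : s(x,y) ∈ D := hedgeD x hcx hxE hadj.2.1 y hadj.2.2 hadj.1
        have hyE : y ∈ cverts (E₀ : Set (Sym2 V)) := ⟨s(x,y), by exact_mod_cast hDE hxy, by simp⟩
        have hcy : H.Reachable c y := hcx.trans (SimpleGraph.Adj.reachable hadj)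
        have hA : (fromEdgeSet (D : Set (Sym2 V))).Adj x y := by
          rw [fromEdgeSet_adj]
          exact ⟨by exact_mod_cast hxy, hadj.1.ne⟩
        exact hA.reachable.trans (ih hcy hyE)
    have hDconn : ∀ u ∈ cverts (D : Set (Sym2 V)),
        (fromEdgeSet (D : Set (Sym2 V))).Reachable u c := by
      intro u hu
      obtain ⟨p⟩ := hreachD u hu
      exact (keyD c u p (Reachable.refl _) hCmem).symm
    have PD : Pend G D c := by
      refine ⟨fun e' h => hP.sub e' (hDE h), hDconn, ?_⟩
      intro v hvD hvc w hadj
      have hvr : v ≠ r := fun h => hrD (h ▸ hvD)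
      have hwr : w ≠ r := by
        intro h
        subst h
        exact hvc (hsep v (hreachD v hvD) hadj.symm)
      exact hedgeD v (hreachD v hvD) (cverts_mono (by exact_mod_cast hDE) hvD) hvr w hwr hadj
    -- edges at c either go to r or lie in D
    have hcedge : ∀ w, G.Adj c w → w ≠ r → s(c, w) ∈ D := by
      intro w hadj hw
      exact hedgeD c (Reachable.refl _) hCmem hcr w hw hadj
    have hE₁E : E₁ ⊆ E₀ := Finset.sdiff_subset
    have hceE₁ : s(r,c) ∉ E₁ := by
      intro h
      exact (Finset.mem_sdiff.mp h).2 (Finset.mem_insert_self _ _)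
    have hDdisjE₁ : Disjoint D E₁ :=
      (Finset.sdiff_disjoint.symm).mono_left (Finset.subset_insert _ _)
    -- a vertex of E₁ other than r is not c and not in cverts D
    have hsepE₁ : ∀ v, v ∈ cverts (E₁ : Set (Sym2 V)) → v ≠ r →
        v ≠ c ∧ v ∉ cverts (D : Set (Sym2 V)) := by
      rintro v ⟨e', he', hv⟩ hvr
      have he'E₁ : e' ∈ E₁ := by exact_mod_cast he'
      have h1 := Finset.mem_sdiff.mp he'E₁
      have hnotc : e' ≠ s(r,c) := fun h => h1.2 (h ▸ Finset.mem_insert_self _ _)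
      have hnotD : e' ∉ D := fun h => h1.2 (Finset.mem_insert_of_mem h)
      obtain ⟨w', rfl⟩ := edge_decomp hv
      have hadj : G.Adj v w' := (G.mem_edgeSet).mp (hP.sub _ h1.1)
      have hvc : v ≠ c := by
        rintro rfl
        by_cases hw' : w' = r
        · subst hw'
          exact hnotc Sym2.eq_swap
        · exact hnotD (hcedge w' hadj hw')
      refine ⟨hvc, ?_⟩
      intro hvD
      exact hnotD (PD.closed v hvD hvc w' hadj)
    have hE₁closed : ∀ v ∈ cverts (E₁ : Set (Sym2 V)), v ≠ r →
        ∀ w, G.Adj v w → s(v, w) ∈ E₁ := by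
      intro v hv hvr w hadj
      obtain ⟨hvc, hvD⟩ := hsepE₁ v hv hvr
      have hE : s(v,w) ∈ E₀ := hP.closed v (cverts_mono (by exact_mod_cast hE₁E) hv) hvr w hadj
      rw [hE₁def, Finset.mem_sdiff]
      refine ⟨hE, ?_⟩
      intro hmem
      rcases Finset.mem_insert.mp hmem with h | h
      · have : v ∈ s(r,c) := h ▸ (by simp : v ∈ s(v,w))
        rcases Sym2.mem_iff.mp this with h' | h'
        · exact hvr h'
        · exact hvc h'
      · exact hvD ⟨s(v,w), by exact_mod_cast h, by simp⟩
    have keyE₁ : ∀ (x u : V) (p : (fromEdgeSet (E₀ : Set (Sym2 V))).Walk x u),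
        x ∈ cverts (E₁ : Set (Sym2 V)) → u = r →
        (fromEdgeSet (E₁ : Set (Sym2 V))).Reachable x r := by
      intro x u p
      induction p with
      | nil => rintro _ rfl; exact Reachable.refl _
      | @cons x y u hadj q ih =>
        intro hx hur
        by_cases hxr : x = r
        · subst hxr; exact Reachable.refl _
        · rw [fromEdgeSet_adj] at hadj
          have hGadj : G.Adj x y := (G.mem_edgeSet).mp (hP.sub _ (by exact_mod_cast hadj.1))
          have hxy : s(x,y) ∈ E₁ := hE₁closed x hx hxr y hGadj
          have hy : y ∈ cverts (E₁ : Set (Sym2 V)) := ⟨s(x,y), by exact_mod_cast hxy, by simp⟩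
          have hA : (fromEdgeSet (E₁ : Set (Sym2 V))).Adj x y := by
            rw [fromEdgeSet_adj]
            exact ⟨by exact_mod_cast hxy, hGadj.ne⟩
          exact hA.reachable.trans (ih hy hur)
    have PE₁ : Pend G E₁ r := by
      refine ⟨fun e' h => hP.sub e' (hE₁E h), ?_, hE₁closed⟩
      intro u hu
      obtain ⟨p⟩ := hP.conn u (cverts_mono (by exact_mod_cast hE₁E) hu)
      exact keyE₁ u r p hu rfl
    have hclass : ∀ e' ∈ E₀, e' = s(r,c) ∨ e' ∈ D ∨ e' ∈ E₁ := by
      intro e' h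
      by_cases h1 : e' = s(r,c)
      · exact Or.inl h1
      by_cases h2 : e' ∈ D
      · exact Or.inr (Or.inl h2)
      · exact Or.inr (Or.inr (Finset.mem_sdiff.mpr ⟨h, by
          intro hmem
          rcases Finset.mem_insert.mp hmem with h' | h'
          exacts [h1 h', h2 h']⟩))
    have hredges : ∀ w, G.Adj r w → s(r, w) ∈ E₀ → s(r, w) = s(r,c) ∨ s(r, w) ∈ E₁ := by
      intro w hadj hmem
      rcases hclass _ hmem with h | h | h
      · exact Or.inl h
      · exact absurd (((hD _).mp h).2.1) (by simp)
      · exact Or.inr h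
    have hDcard : D.card ≤ N := by
      have : D.card < E₀.card := Finset.card_lt_card ⟨hDE, fun hsub => heD (hsub he)⟩
      omega
    have hE₁card : E₁.card ≤ N := by
      have : E₁.card < E₀.card := Finset.card_lt_card ⟨hE₁E, fun hsub => hceE₁ (hsub he)⟩
      omega
    obtain ⟨CSc, Rc, resc⟩ := IH D c hDcard PD
    obtain ⟨CS₁, R₁, res₁⟩ := IH E₁ r hE₁card PE₁
    set S : Finset (Sym2 V) := insert (s(r,c)) Rc with hSdef
    set acc : Finset (Sym2 V) := R₁ ∪ S with haccdef
    have hSE : S ⊆ E₀ := by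
      rw [hSdef]; exact Finset.insert_subset he (resc.RsubE.trans hDE)
    have hSsubID : S ⊆ insert (s(r,c)) D := Finset.insert_subset_insert _ resc.RsubE
    have hScard : S.card ≤ s := by
      have h1 := Finset.card_insert_le (s(r,c)) Rc
      rw [← hSdef] at h1
      have h2 := resc.Rcard
      omega
    have heS : s(r,c) ∈ S := Finset.mem_insert_self _ _
    have hSr : r ∈ cverts (S : Set (Sym2 V)) := ⟨s(r,c), by exact_mod_cast heS, by simp⟩
    have hRcS : Rc ⊆ S := Finset.subset_insert _ _
    have monoR : ∀ {A B : Finset (Sym2 V)}, A ⊆ B → ∀ {a b : V},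
        (fromEdgeSet (A : Set (Sym2 V))).Reachable a b →
        (fromEdgeSet (B : Set (Sym2 V))).Reachable a b := by
      intro A B hAB a b h
      exact h.mono (fromEdgeSet_mono (by exact_mod_cast hAB))
    have hSadj : (fromEdgeSet (S : Set (Sym2 V))).Adj r c := by
      rw [fromEdgeSet_adj]; exact ⟨by exact_mod_cast heS, hrc.ne⟩
    have hSconn : ∀ u ∈ cverts (S : Set (Sym2 V)),
        (fromEdgeSet (S : Set (Sym2 V))).Reachable u r := by
      rintro u ⟨e', he', hv⟩
      have hmem : e' ∈ S := by exact_mod_cast he'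
      rcases Finset.mem_insert.mp hmem with rfl | hmem
      · rcases Sym2.mem_iff.mp hv with rfl | rfl
        · exact Reachable.refl _
        · exact hSadj.symm.reachable
      · have huRc : u ∈ cverts (Rc : Set (Sym2 V)) := ⟨e', by exact_mod_cast hmem, hv⟩
        exact (monoR hRcS (resc.Rconn u huRc)).trans hSadj.symm.reachable
    have cvu : ∀ (A B : Finset (Sym2 V)),
        cverts ((A ∪ B : Finset (Sym2 V)) : Set (Sym2 V)) =
        cverts (A : Set (Sym2 V)) ∪ cverts (B : Set (Sym2 V)) := by
      intro A B; rw [Finset.coe_union, cverts_union]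
    have hSacc : S ⊆ acc := Finset.subset_union_right
    have hR₁acc : R₁ ⊆ acc := Finset.subset_union_left
    have hSvert : ∀ v, v ∈ cverts (S : Set (Sym2 V)) →
        v = r ∨ v = c ∨ v ∈ cverts (Rc : Set (Sym2 V)) := by
      rintro v ⟨e', he', hv⟩
      have hmem : e' ∈ S := by exact_mod_cast he'
      rcases Finset.mem_insert.mp hmem with rfl | hmem
      · rcases Sym2.mem_iff.mp hv with rfl | rfl
        · exact Or.inl rfl
        · exact Or.inr (Or.inl rfl)
      · exact Or.inr (Or.inr ⟨e', by exact_mod_cast hmem, hv⟩)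
    have hcS_closed_pre : (∀ w, G.Adj c w → s(c,w) ∈ D → s(c,w) ∈ Rc) → ACl G S c := by
      intro hl w hadj
      by_cases hw : w = r
      · subst hw; exact hSr
      · have h1 : s(c,w) ∈ Rc := hl w hadj (hcedge w hadj hw)
        exact ⟨s(c,w), by exact_mod_cast (hRcS h1), by simp⟩
    have SOpen : ∃ x, ∀ v ∈ cverts (S : Set (Sym2 V)), v ≠ r → v ≠ x → ACl G S v := by
      rcases resc.flag with hl | ⟨hpurec, _⟩
      · obtain ⟨xc, hxc⟩ := resc.Rbnd
        refine ⟨xc, ?_⟩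
        intro v hv hvr hvx
        by_cases hvc : v = c
        · subst hvc; exact hcS_closed_pre hl
        · rcases hSvert v hv with rfl | rfl | hvRc
          · exact absurd rfl hvr
          · exact absurd rfl hvc
          · exact (hxc v hvRc hvc hvx).mono hRcS
      · refine ⟨c, ?_⟩
        intro v hv hvr hvc
        rcases hSvert v hv with rfl | rfl | hvRc
        · exact absurd rfl hvr
        · exact absurd rfl hvc
        · exact (hpurec v hvRc hvc).mono hRcS
    obtain ⟨xS, hxS⟩ := SOpen
    obtain ⟨x₁, hx₁⟩ := res₁.Rbnd
    have haccE : acc ⊆ E₀ := Finset.union_subset (res₁.RsubE.trans hE₁E) hSE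
    have hacc_cv : cverts (acc : Set (Sym2 V)) =
        cverts (R₁ : Set (Sym2 V)) ∪ cverts (S : Set (Sym2 V)) := cvu R₁ S
    have hacc_conn : ∀ u ∈ cverts (acc : Set (Sym2 V)),
        (fromEdgeSet (acc : Set (Sym2 V))).Reachable u r := by
      intro u hu
      rw [hacc_cv] at hu
      rcases hu with hu | hu
      · exact monoR hR₁acc (res₁.Rconn u hu)
      · exact monoR hSacc (hSconn u hu)
    have hacc_ne : acc.Nonempty := ⟨s(r,c), Finset.mem_union_right _ heS⟩
    have hacc_card2 : acc.card ≤ 2 * s := by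
      have h1 := Finset.card_union_le R₁ S
      rw [← haccdef] at h1
      have h2 := res₁.Rcard
      omega
    have hdisj_IDE₁ : Disjoint (insert (s(r,c)) D) E₁ := Finset.sdiff_disjoint.symm
    have hSdisjE₁sub : ∀ {T : Finset (Sym2 V)}, T ⊆ E₁ → Disjoint S T := by
      intro T hT
      exact hdisj_IDE₁.mono hSsubID hT
    have hdisj_S_R₁ : Disjoint S R₁ := hSdisjE₁sub res₁.RsubE
    have hdisj_S_CS₁ : ∀ C ∈ CS₁, Disjoint S C := fun C hC => hSdisjE₁sub (res₁.CsubE C hC)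
    have hdisj_CSc_E₁ : ∀ C ∈ CSc, ∀ {T : Finset (Sym2 V)}, T ⊆ E₁ → Disjoint C T := by
      intro C hC T hT
      exact hDdisjE₁.mono (resc.CsubE C hC) hT
    have hdisj_cross : ∀ C ∈ CSc, ∀ C' ∈ CS₁, Disjoint C C' :=
      fun C hC C' hC' => hdisj_CSc_E₁ C hC (res₁.CsubE C' hC')
    have hdisj_CSc_R₁ : ∀ C ∈ CSc, Disjoint C R₁ := fun C hC => hdisj_CSc_E₁ C hC res₁.RsubE
    have heC : ∀ C ∈ CSc, s(r,c) ∉ C := fun C hC h => heD (resc.CsubE C hC h)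
    have hdisj_S_CSc : ∀ C ∈ CSc, Disjoint C S := fun C hC => by
      rw [hSdef, Finset.disjoint_insert_right]
      exact ⟨heC C hC, resc.disjR C hC⟩
    have hdisj_acc_CSc : ∀ C ∈ CSc, Disjoint C acc := fun C hC => by
      rw [haccdef, Finset.disjoint_union_right]
      exact ⟨hdisj_CSc_R₁ C hC, hdisj_S_CSc C hC⟩
    have hdisj_acc_CS₁ : ∀ C ∈ CS₁, Disjoint C acc := fun C hC => by
      rw [haccdef, Finset.disjoint_union_right]
      exact ⟨res₁.disjR C hC, (hdisj_S_CS₁ C hC).symm⟩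
    have hcollDisj : Disjoint CSc CS₁ := by
      rw [Finset.disjoint_left]
      intro C hC hC1
      obtain ⟨x0, hx0⟩ := resc.clNe C hC
      exact (Finset.disjoint_left.mp hDdisjE₁) (resc.CsubE C hC hx0) (res₁.CsubE C hC1 hx0)
    have hS_notin_CSc : S ∉ CSc := fun h => heD (resc.CsubE S h heS)
    have hS_notin_CS₁ : S ∉ CS₁ := fun h => hceE₁ (res₁.CsubE S h heS)
    have hacc_notin_CSc : acc ∉ CSc := fun h =>
      heD (resc.CsubE acc h (Finset.mem_union_right _ heS))
    have hacc_notin_CS₁ : acc ∉ CS₁ := fun h =>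
      hceE₁ (res₁.CsubE acc h (Finset.mem_union_right _ heS))
    have hcover_acc : ∀ e' ∈ E₀, e' ∈ acc ∨ (∃ C ∈ CSc, e' ∈ C) ∨ (∃ C ∈ CS₁, e' ∈ C) := by
      intro e' h
      rcases hclass e' h with rfl | hd | h1
      · exact Or.inl (Finset.mem_union_right _ heS)
      · rcases resc.cover e' hd with h2 | h2
        · exact Or.inl (Finset.mem_union_right _ (hRcS h2))
        · exact Or.inr (Or.inl h2)
      · rcases res₁.cover e' h1 with h2 | h2
        · exact Or.inl (Finset.mem_union_left _ h2)
        · exact Or.inr (Or.inr h2)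
    have hUsub : ∀ C ∈ CSc ∪ CS₁, C ⊆ E₀ := by
      intro C hC
      rcases Finset.mem_union.mp hC with h | h
      exacts [(resc.CsubE C h).trans hDE, (res₁.CsubE C h).trans hE₁E]
    have hUne : ∀ C ∈ CSc ∪ CS₁, C.Nonempty := by
      intro C hC
      rcases Finset.mem_union.mp hC with h | h
      exacts [resc.clNe C h, res₁.clNe C h]
    have hUcard : ∀ C ∈ CSc ∪ CS₁, C.card ≤ 2 * s := by
      intro C hC
      rcases Finset.mem_union.mp hC with h | h
      exacts [resc.clCard C h, res₁.clCard C h]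
    have hUconn : ∀ C ∈ CSc ∪ CS₁, ∀ u ∈ cverts (C : Set (Sym2 V)),
        ∀ v ∈ cverts (C : Set (Sym2 V)),
        (fromEdgeSet (C : Set (Sym2 V))).Reachable u v := by
      intro C hC
      rcases Finset.mem_union.mp hC with h | h
      exacts [resc.clConn C h, res₁.clConn C h]
    have hUbnd : ∀ C ∈ CSc ∪ CS₁, ∃ x y, ∀ v ∈ cverts (C : Set (Sym2 V)),
        v ≠ x → v ≠ y → ACl G C v := by
      intro C hC
      rcases Finset.mem_union.mp hC with h | h
      exacts [resc.clBnd C h, res₁.clBnd C h]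
    have hUdisj : ∀ C₁ ∈ CSc ∪ CS₁, ∀ C₂ ∈ CSc ∪ CS₁, C₁ ≠ C₂ → Disjoint C₁ C₂ := by
      intro C₁ h₁ C₂ h₂ hne12
      rcases Finset.mem_union.mp h₁ with h₁ | h₁ <;> rcases Finset.mem_union.mp h₂ with h₂ | h₂
      · exact resc.disjC _ h₁ _ h₂ hne12
      · exact hdisj_cross _ h₁ _ h₂
      · exact (hdisj_cross _ h₂ _ h₁).symm
      · exact res₁.disjC _ h₁ _ h₂ hne12
    have hUcardeq : (CSc ∪ CS₁).card = CSc.card + CS₁.card :=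
      Finset.card_union_of_disjoint hcollDisj
    have hUfiltereq : ((CSc ∪ CS₁).filter (fun C => s ≤ C.card)).card =
        (CSc.filter (fun C => s ≤ C.card)).card + (CS₁.filter (fun C => s ≤ C.card)).card := by
      rw [Finset.filter_union]
      exact Finset.card_union_of_disjoint
        (hcollDisj.mono (Finset.filter_subset _ _) (Finset.filter_subset _ _))
    have hUcnt : (CSc ∪ CS₁) = ∅ ∨ (CSc ∪ CS₁).card + 2 ≤
        3 * ((CSc ∪ CS₁).filter (fun C => s ≤ C.card)).card := by
      rcases resc.cnt with h1 | h1 <;> rcases res₁.cnt with h2 | h2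
      · left; rw [h1, h2]; simp
      · right
        rw [hUcardeq, hUfiltereq, h1]
        simpa using h2
      · right
        rw [hUcardeq, hUfiltereq, h2]
        simpa using h1
      · right
        rw [hUcardeq, hUfiltereq]
        omega
    have hemptyR : ∀ u : V, u ∉ cverts (((∅ : Finset (Sym2 V))) : Set (Sym2 V)) := by
      intro u hu
      rw [Finset.coe_empty, cverts_empty] at hu
      exact hu
    by_cases hCSc0 : CSc = ∅
    · -- the unit S is closed
      have hRcD : Rc = D := by
        apply Finset.Subset.antisymm resc.RsubE
        intro e' h
        rcases resc.cover e' h with h1 | ⟨C, hC, _⟩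
        · exact h1
        · rw [hCSc0] at hC
          exact absurd hC (Finset.notMem_empty C)
      have SClosed : ∀ v ∈ cverts (S : Set (Sym2 V)), v ≠ r → ACl G S v := by
        intro v hv hvr
        by_cases hvc : v = c
        · subst hvc
          exact hcS_closed_pre (fun w hadj h => by rw [hRcD]; exact h)
        · rcases hSvert v hv with rfl | rfl | hvRc
          · exact absurd rfl hvr
          · exact absurd rfl hvc
          · intro w hadj
            have hvD : v ∈ cverts (D : Set (Sym2 V)) := by rw [← hRcD]; exact hvRc
            have h1 : s(v,w) ∈ D := PD.closed v hvD hvc w hadj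
            rw [← hRcD] at h1
            exact ⟨s(v,w), by exact_mod_cast (hRcS h1), by simp⟩
      by_cases hsz : acc.card < s
      · -- A1: keep accumulating, no new cluster
        refine ⟨CSc ∪ CS₁, acc, haccE, hUsub, ?_, ?_, hUdisj, hUne, hUcard, hUconn, hUbnd,
          hsz, hacc_conn, ?_, ?_, hUcnt⟩
        · intro e' h
          rcases hcover_acc e' h with h | ⟨C, hC, hm⟩ | ⟨C, hC, hm⟩
          · exact Or.inl h
          · exact Or.inr ⟨C, Finset.mem_union_left _ hC, hm⟩
          · exact Or.inr ⟨C, Finset.mem_union_right _ hC, hm⟩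
        · intro C hC
          rcases Finset.mem_union.mp hC with h | h
          exacts [hdisj_acc_CSc C h, hdisj_acc_CS₁ C h]
        · refine ⟨x₁, ?_⟩
          intro v hv hvr hvx
          rw [hacc_cv] at hv
          rcases hv with hv | hv
          · exact (hx₁ v hv hvr hvx).mono hR₁acc
          · exact (SClosed v hv hvr).mono hSacc
        · rcases res₁.flag with hf | ⟨hp1', hCS1ne'⟩
          · refine Or.inl ?_
            intro w hadj hmem
            rcases hredges w hadj hmem with h | h
            · rw [h]; exact Finset.mem_union_right _ heS
            · exact Finset.mem_union_left _ (hf w hadj h)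
          · refine Or.inr ⟨?_, ?_⟩
            · intro v hv hvr
              rw [hacc_cv] at hv
              rcases hv with hv | hv
              · exact (hp1' v hv hvr).mono hR₁acc
              · exact (SClosed v hv hvr).mono hSacc
            · obtain ⟨C, hC⟩ := hCS1ne'
              exact ⟨C, Finset.mem_union_right _ hC⟩
      · -- A2: flush the accumulator as a big cluster
        have hsz' : s ≤ acc.card := le_of_not_gt hsz
        have haccU : acc ∉ CSc ∪ CS₁ := by
          intro h
          rcases Finset.mem_union.mp h with h | h
          exacts [hacc_notin_CSc h, hacc_notin_CS₁ h]
        refine ⟨insert acc (CSc ∪ CS₁), ∅, Finset.empty_subset _, ?_, ?_,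
          fun C _ => Finset.disjoint_empty_right _, ?_, ?_, ?_, ?_, ?_,
          by simp only [Finset.card_empty]; omega, ?_, ⟨r, ?_⟩, ?_, ?_⟩
        · intro C hC
          rcases Finset.mem_insert.mp hC with rfl | hC
          exacts [haccE, hUsub C hC]
        · intro e' h
          rcases hcover_acc e' h with h | ⟨C, hC, hm⟩ | ⟨C, hC, hm⟩
          · exact Or.inr ⟨acc, Finset.mem_insert_self _ _, h⟩
          · exact Or.inr ⟨C, Finset.mem_insert_of_mem (Finset.mem_union_left _ hC), hm⟩
          · exact Or.inr ⟨C, Finset.mem_insert_of_mem (Finset.mem_union_right _ hC), hm⟩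
        · intro C₁ h₁ C₂ h₂ hne12
          rcases Finset.mem_insert.mp h₁ with rfl | h₁ <;>
            rcases Finset.mem_insert.mp h₂ with rfl | h₂
          · exact absurd rfl hne12
          · rcases Finset.mem_union.mp h₂ with h | h
            exacts [(hdisj_acc_CSc _ h).symm, (hdisj_acc_CS₁ _ h).symm]
          · rcases Finset.mem_union.mp h₁ with h | h
            exacts [hdisj_acc_CSc _ h, hdisj_acc_CS₁ _ h]
          · exact hUdisj _ h₁ _ h₂ hne12
        · intro C hC
          rcases Finset.mem_insert.mp hC with rfl | hC
          exacts [hacc_ne, hUne C hC]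
        · intro C hC
          rcases Finset.mem_insert.mp hC with rfl | hC
          exacts [hacc_card2, hUcard C hC]
        · intro C hC
          rcases Finset.mem_insert.mp hC with rfl | hC
          · intro u hu v' hv'
            exact (hacc_conn u hu).trans (hacc_conn v' hv').symm
          · exact hUconn C hC
        · intro C hC
          rcases Finset.mem_insert.mp hC with rfl | hC
          · refine ⟨r, x₁, ?_⟩
            intro v hv hvr hvx
            rw [hacc_cv] at hv
            rcases hv with hv | hv
            · exact (hx₁ v hv hvr hvx).mono hR₁acc
            · exact (SClosed v hv hvr).mono hSacc
          · exact hUbnd C hC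
        · intro u hu
          exact absurd hu (hemptyR u)
        · intro v hv
          exact absurd hv (hemptyR v)
        · exact Or.inr ⟨fun v hv => absurd hv (hemptyR v), ⟨acc, Finset.mem_insert_self _ _⟩⟩
        · refine Or.inr ?_
          have hcd : (insert acc (CSc ∪ CS₁)).card = (CSc ∪ CS₁).card + 1 :=
            Finset.card_insert_of_notMem haccU
          have hft : ((insert acc (CSc ∪ CS₁)).filter (fun C => s ≤ C.card)).card =
              ((CSc ∪ CS₁).filter (fun C => s ≤ C.card)).card + 1 := by
            rw [Finset.filter_insert, if_pos hsz']
            exact Finset.card_insert_of_notMem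
              (fun h => haccU (Finset.mem_of_mem_filter _ h))
          rw [hcd, hft]
          rcases hUcnt with h0 | hle
          · rw [h0]; simp
          · omega
    · rcases res₁.flag with hf1 | ⟨hp1, hCS1ne⟩
      · by_cases hpure : ∀ v ∈ cverts (R₁ : Set (Sym2 V)), v ≠ r → ACl G R₁ v
        · by_cases hsz : acc.card < s
          · -- B0a: open unit retained into pure residue
            refine ⟨CSc ∪ CS₁, acc, haccE, hUsub, ?_, ?_, hUdisj, hUne, hUcard, hUconn, hUbnd,
              hsz, hacc_conn, ?_, ?_, hUcnt⟩
            · intro e' h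
              rcases hcover_acc e' h with h | ⟨C, hC, hm⟩ | ⟨C, hC, hm⟩
              · exact Or.inl h
              · exact Or.inr ⟨C, Finset.mem_union_left _ hC, hm⟩
              · exact Or.inr ⟨C, Finset.mem_union_right _ hC, hm⟩
            · intro C hC
              rcases Finset.mem_union.mp hC with h | h
              exacts [hdisj_acc_CSc C h, hdisj_acc_CS₁ C h]
            · refine ⟨xS, ?_⟩
              intro v hv hvr hvx
              rw [hacc_cv] at hv
              rcases hv with hv | hv
              · exact (hpure v hv hvr).mono hR₁acc
              · exact (hxS v hv hvr hvx).mono hSacc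
            · refine Or.inl ?_
              intro w hadj hmem
              rcases hredges w hadj hmem with h | h
              · rw [h]; exact Finset.mem_union_right _ heS
              · exact Finset.mem_union_left _ (hf1 w hadj h)
          · -- B0b: flush the accumulator (it contains the open unit S)
            have hsz' : s ≤ acc.card := le_of_not_gt hsz
            have haccU : acc ∉ CSc ∪ CS₁ := by
              intro h
              rcases Finset.mem_union.mp h with h | h
              exacts [hacc_notin_CSc h, hacc_notin_CS₁ h]
            refine ⟨insert acc (CSc ∪ CS₁), ∅, Finset.empty_subset _, ?_, ?_,
              fun C _ => Finset.disjoint_empty_right _, ?_, ?_, ?_, ?_, ?_,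
              by simp only [Finset.card_empty]; omega, ?_, ⟨r, ?_⟩, ?_, ?_⟩
            · intro C hC
              rcases Finset.mem_insert.mp hC with rfl | hC
              exacts [haccE, hUsub C hC]
            · intro e' h
              rcases hcover_acc e' h with h | ⟨C, hC, hm⟩ | ⟨C, hC, hm⟩
              · exact Or.inr ⟨acc, Finset.mem_insert_self _ _, h⟩
              · exact Or.inr ⟨C, Finset.mem_insert_of_mem (Finset.mem_union_left _ hC), hm⟩
              · exact Or.inr ⟨C, Finset.mem_insert_of_mem (Finset.mem_union_right _ hC), hm⟩
            · intro C₁ h₁ C₂ h₂ hne12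
              rcases Finset.mem_insert.mp h₁ with rfl | h₁ <;>
                rcases Finset.mem_insert.mp h₂ with rfl | h₂
              · exact absurd rfl hne12
              · rcases Finset.mem_union.mp h₂ with h | h
                exacts [(hdisj_acc_CSc _ h).symm, (hdisj_acc_CS₁ _ h).symm]
              · rcases Finset.mem_union.mp h₁ with h | h
                exacts [hdisj_acc_CSc _ h, hdisj_acc_CS₁ _ h]
              · exact hUdisj _ h₁ _ h₂ hne12
            · intro C hC
              rcases Finset.mem_insert.mp hC with rfl | hC
              exacts [hacc_ne, hUne C hC]
            · intro C hC
              rcases Finset.mem_insert.mp hC with rfl | hC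
              exacts [hacc_card2, hUcard C hC]
            · intro C hC
              rcases Finset.mem_insert.mp hC with rfl | hC
              · intro u hu v' hv'
                exact (hacc_conn u hu).trans (hacc_conn v' hv').symm
              · exact hUconn C hC
            · intro C hC
              rcases Finset.mem_insert.mp hC with rfl | hC
              · refine ⟨r, xS, ?_⟩
                intro v hv hvr hvx
                rw [hacc_cv] at hv
                rcases hv with hv | hv
                · exact (hpure v hv hvr).mono hR₁acc
                · exact (hxS v hv hvr hvx).mono hSacc
              · exact hUbnd C hC
            · intro u hu
              exact absurd hu (hemptyR u)
            · intro v hv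
              exact absurd hv (hemptyR v)
            · exact Or.inr ⟨fun v hv => absurd hv (hemptyR v), ⟨acc, Finset.mem_insert_self _ _⟩⟩
            · refine Or.inr ?_
              have hcd : (insert acc (CSc ∪ CS₁)).card = (CSc ∪ CS₁).card + 1 :=
                Finset.card_insert_of_notMem haccU
              have hft : ((insert acc (CSc ∪ CS₁)).filter (fun C => s ≤ C.card)).card =
                  ((CSc ∪ CS₁).filter (fun C => s ≤ C.card)).card + 1 := by
                rw [Finset.filter_insert, if_pos hsz']
                exact Finset.card_insert_of_notMem
                  (fun h => haccU (Finset.mem_of_mem_filter _ h))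
              rw [hcd, hft]
              rcases hUcnt with h0 | hle
              · rw [h0]; simp
              · omega
        · -- B2: two open parts meet; output both S and R₁ as clusters
          push_neg at hpure
          obtain ⟨v0, hv0, hv0r, hn0⟩ := hpure
          have hR₁ne : R₁.Nonempty := by
            obtain ⟨e', he', -⟩ := hv0
            exact ⟨e', by exact_mod_cast he'⟩
          have hCS1ne : CS₁.Nonempty := by
            rw [Finset.nonempty_iff_ne_empty]
            intro h0
            apply hn0
            intro w hadj
            have hR₁E : R₁ = E₁ := by
              apply Finset.Subset.antisymm res₁.RsubE
              intro e' hme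
              rcases res₁.cover e' hme with h1 | ⟨C, hC, -⟩
              · exact h1
              · rw [h0] at hC
                exact absurd hC (Finset.notMem_empty C)
            have hvE : v0 ∈ cverts (E₁ : Set (Sym2 V)) := by rw [← hR₁E]; exact hv0
            have hmm : s(v0,w) ∈ E₁ := hE₁closed v0 hvE hv0r w hadj
            rw [← hR₁E] at hmm
            exact ⟨s(v0,w), by exact_mod_cast hmm, by simp⟩
          have hS_ne_R₁ : S ≠ R₁ := fun h => hceE₁ (res₁.RsubE (h ▸ heS))
          have hR₁U : R₁ ∉ CSc ∪ CS₁ := by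
            intro h
            rcases Finset.mem_union.mp h with h | h
            · obtain ⟨z, hz⟩ := hR₁ne
              exact (Finset.disjoint_left.mp (hdisj_CSc_R₁ R₁ h)) hz hz
            · obtain ⟨z, hz⟩ := hR₁ne
              exact (Finset.disjoint_left.mp (res₁.disjR R₁ h)) hz hz
          have hS_notin : S ∉ insert R₁ (CSc ∪ CS₁) := by
            intro h
            rcases Finset.mem_insert.mp h with h | h
            · exact hS_ne_R₁ h
            · rcases Finset.mem_union.mp h with h | h
              exacts [hS_notin_CSc h, hS_notin_CS₁ h]
          refine ⟨insert S (insert R₁ (CSc ∪ CS₁)), ∅, Finset.empty_subset _, ?_, ?_,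
            fun C _ => Finset.disjoint_empty_right _, ?_, ?_, ?_, ?_, ?_,
            by simp only [Finset.card_empty]; omega, ?_, ⟨r, ?_⟩, ?_, ?_⟩
          · intro C hC
            rcases Finset.mem_insert.mp hC with rfl | hC
            · exact hSE
            rcases Finset.mem_insert.mp hC with rfl | hC
            · exact res₁.RsubE.trans hE₁E
            · exact hUsub C hC
          · intro e' h
            rcases hclass e' h with rfl | hd | h1
            · exact Or.inr ⟨S, Finset.mem_insert_self _ _, heS⟩
            · rcases resc.cover e' hd with h2 | ⟨C, hC, hm⟩
              · exact Or.inr ⟨S, Finset.mem_insert_self _ _, hRcS h2⟩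
              · exact Or.inr ⟨C, Finset.mem_insert_of_mem
                  (Finset.mem_insert_of_mem (Finset.mem_union_left _ hC)), hm⟩
            · rcases res₁.cover e' h1 with h2 | ⟨C, hC, hm⟩
              · exact Or.inr ⟨R₁, Finset.mem_insert_of_mem (Finset.mem_insert_self _ _), h2⟩
              · exact Or.inr ⟨C, Finset.mem_insert_of_mem
                  (Finset.mem_insert_of_mem (Finset.mem_union_right _ hC)), hm⟩
          · have hchar : ∀ C, C ∈ insert S (insert R₁ (CSc ∪ CS₁)) →
                C = S ∨ C = R₁ ∨ C ∈ CSc ∨ C ∈ CS₁ := by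
              intro C hC
              rcases Finset.mem_insert.mp hC with h | hC
              · exact Or.inl h
              rcases Finset.mem_insert.mp hC with h | hC
              · exact Or.inr (Or.inl h)
              rcases Finset.mem_union.mp hC with h | h
              · exact Or.inr (Or.inr (Or.inl h))
              · exact Or.inr (Or.inr (Or.inr h))
            intro C₁ h₁ C₂ h₂ hne12
            rcases hchar C₁ h₁ with h1 | h1 | h1 | h1 <;>
              rcases hchar C₂ h₂ with h2 | h2 | h2 | h2
            · exact absurd (h1.trans h2.symm) hne12
            · rw [h1, h2]; exact hdisj_S_R₁
            · rw [h1]; exact (hdisj_S_CSc _ h2).symm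
            · rw [h1]; exact hdisj_S_CS₁ _ h2
            · rw [h1, h2]; exact hdisj_S_R₁.symm
            · exact absurd (h1.trans h2.symm) hne12
            · rw [h1]; exact (hdisj_CSc_R₁ _ h2).symm
            · rw [h1]; exact (res₁.disjR _ h2).symm
            · rw [h2]; exact hdisj_S_CSc _ h1
            · rw [h2]; exact hdisj_CSc_R₁ _ h1
            · exact resc.disjC _ h1 _ h2 hne12
            · exact hdisj_cross _ h1 _ h2
            · rw [h2]; exact (hdisj_S_CS₁ _ h1).symm
            · rw [h2]; exact res₁.disjR _ h1
            · exact (hdisj_cross _ h2 _ h1).symm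
            · exact res₁.disjC _ h1 _ h2 hne12
          · intro C hC
            rcases Finset.mem_insert.mp hC with rfl | hC
            · exact ⟨s(r,c), heS⟩
            rcases Finset.mem_insert.mp hC with rfl | hC
            · exact hR₁ne
            · exact hUne C hC
          · intro C hC
            rcases Finset.mem_insert.mp hC with rfl | hC
            · exact hScard.trans (by omega)
            rcases Finset.mem_insert.mp hC with rfl | hC
            · exact (le_of_lt res₁.Rcard).trans (by omega)
            · exact hUcard C hC
          · intro C hC
            rcases Finset.mem_insert.mp hC with rfl | hC
            · intro u hu v' hv'
              exact (hSconn u hu).trans (hSconn v' hv').symm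
            rcases Finset.mem_insert.mp hC with rfl | hC
            · intro u hu v' hv'
              exact (res₁.Rconn u hu).trans (res₁.Rconn v' hv').symm
            · exact hUconn C hC
          · intro C hC
            rcases Finset.mem_insert.mp hC with rfl | hC
            · exact ⟨r, xS, hxS⟩
            rcases Finset.mem_insert.mp hC with rfl | hC
            · exact ⟨r, x₁, hx₁⟩
            · exact hUbnd C hC
          · intro u hu
            exact absurd hu (hemptyR u)
          · intro v hv
            exact absurd hv (hemptyR v)
          · exact Or.inr ⟨fun v hv => absurd hv (hemptyR v), ⟨S, Finset.mem_insert_self _ _⟩⟩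
          · refine Or.inr ?_
            have hc1 : CSc.card + 2 ≤ 3 * (CSc.filter (fun C => s ≤ C.card)).card := by
              rcases resc.cnt with h | h
              · exact absurd h hCSc0
              · exact h
            have hc2 : CS₁.card + 2 ≤ 3 * (CS₁.filter (fun C => s ≤ C.card)).card := by
              rcases res₁.cnt with h | h
              · exact absurd h (Finset.nonempty_iff_ne_empty.mp hCS1ne)
              · exact h
            have hcd : (insert S (insert R₁ (CSc ∪ CS₁))).card = (CSc ∪ CS₁).card + 2 := by
              rw [Finset.card_insert_of_notMem hS_notin,
                Finset.card_insert_of_notMem hR₁U]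
            have hfsub : ((CSc ∪ CS₁).filter (fun C => s ≤ C.card)).card ≤
                ((insert S (insert R₁ (CSc ∪ CS₁))).filter (fun C => s ≤ C.card)).card :=
              Finset.card_le_card (Finset.filter_subset_filter _
                (fun x hx => Finset.mem_insert_of_mem (Finset.mem_insert_of_mem hx)))
            rw [hcd, hUcardeq]
            rw [hUfiltereq] at hfsub
            omega
      · -- B1: residue already flushed; output the open unit S alone
        have hS_notin : S ∉ CSc ∪ CS₁ := by
          intro h
          rcases Finset.mem_union.mp h with h | h
          exacts [hS_notin_CSc h, hS_notin_CS₁ h]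
        refine ⟨insert S (CSc ∪ CS₁), R₁, res₁.RsubE.trans hE₁E, ?_, ?_, ?_, ?_, ?_, ?_, ?_, ?_,
          res₁.Rcard, res₁.Rconn, ⟨x₁, hx₁⟩,
          Or.inr ⟨hp1, ⟨S, Finset.mem_insert_self _ _⟩⟩, ?_⟩
        · intro C hC
          rcases Finset.mem_insert.mp hC with rfl | hC
          exacts [hSE, hUsub C hC]
        · intro e' h
          rcases hclass e' h with rfl | hd | h1
          · exact Or.inr ⟨S, Finset.mem_insert_self _ _, heS⟩
          · rcases resc.cover e' hd with h2 | ⟨C, hC, hm⟩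
            · exact Or.inr ⟨S, Finset.mem_insert_self _ _, hRcS h2⟩
            · exact Or.inr ⟨C, Finset.mem_insert_of_mem (Finset.mem_union_left _ hC), hm⟩
          · rcases res₁.cover e' h1 with h2 | ⟨C, hC, hm⟩
            · exact Or.inl h2
            · exact Or.inr ⟨C, Finset.mem_insert_of_mem (Finset.mem_union_right _ hC), hm⟩
        · intro C hC
          rcases Finset.mem_insert.mp hC with rfl | hC
          · exact hdisj_S_R₁
          · rcases Finset.mem_union.mp hC with h | h
            exacts [hdisj_CSc_R₁ _ h, res₁.disjR _ h]
        · intro C₁ h₁ C₂ h₂ hne12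
          rcases Finset.mem_insert.mp h₁ with rfl | h₁ <;>
            rcases Finset.mem_insert.mp h₂ with rfl | h₂
          · exact absurd rfl hne12
          · rcases Finset.mem_union.mp h₂ with h | h
            exacts [(hdisj_S_CSc _ h).symm, hdisj_S_CS₁ _ h]
          · rcases Finset.mem_union.mp h₁ with h | h
            exacts [hdisj_S_CSc _ h, (hdisj_S_CS₁ _ h).symm]
          · exact hUdisj _ h₁ _ h₂ hne12
        · intro C hC
          rcases Finset.mem_insert.mp hC with rfl | hC
          exacts [⟨s(r,c), heS⟩, hUne C hC]
        · intro C hC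
          rcases Finset.mem_insert.mp hC with rfl | hC
          exacts [hScard.trans (by omega), hUcard C hC]
        · intro C hC
          rcases Finset.mem_insert.mp hC with rfl | hC
          · intro u hu v' hv'
            exact (hSconn u hu).trans (hSconn v' hv').symm
          · exact hUconn C hC
        · intro C hC
          rcases Finset.mem_insert.mp hC with rfl | hC
          exacts [⟨r, xS, hxS⟩, hUbnd C hC]
        · refine Or.inr ?_
          have hc1 : CSc.card + 2 ≤ 3 * (CSc.filter (fun C => s ≤ C.card)).card := by
            rcases resc.cnt with h | h
            · exact absurd h hCSc0
            · exact h
          have hc2 : CS₁.card + 2 ≤ 3 * (CS₁.filter (fun C => s ≤ C.card)).card := by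
            rcases res₁.cnt with h | h
            · exact absurd h (Finset.nonempty_iff_ne_empty.mp hCS1ne)
            · exact h
          have hcd : (insert S (CSc ∪ CS₁)).card = (CSc ∪ CS₁).card + 1 :=
            Finset.card_insert_of_notMem hS_notin
          have hfsub : ((CSc ∪ CS₁).filter (fun C => s ≤ C.card)).card ≤
              ((insert S (CSc ∪ CS₁)).filter (fun C => s ≤ C.card)).card :=
            Finset.card_le_card (Finset.filter_subset_filter _
              (fun x hx => Finset.mem_insert_of_mem hx))
          rw [hcd, hUcardeq]
          rw [hUfiltereq] at hfsub
          omega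

end Main


/-- Frederickson-style clustering (Lemma 6): every tree `T` with `n > 1` nodes
and every `1 ≤ τ ≤ n` admit a cluster partition `CS` — a family of edge-disjoint
connected subgraphs, each with at least one edge and at most two boundary
nodes, covering all vertices and edges — with `|CS| ≤ c₁·τ` clusters, each on
at most `c₂·n/τ` vertices (stated as `|V(C)|·τ ≤ c₂·n`). -/
theorem stmt17 :
    ∃ c₁ c₂ : ℕ, 0 < c₁ ∧ 0 < c₂ ∧
      ∀ (V : Type) (_ : Fintype V) (G : SimpleGraph V), G.IsTree →
        1 < Fintype.card V → ∀ τ : ℕ, 1 ≤ τ → τ ≤ Fintype.card V →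
        ∃ CS : Finset (Set (Sym2 V)),
          (∀ C ∈ CS, C ⊆ G.edgeSet ∧ C.Nonempty ∧
            (∀ u ∈ cverts C, ∀ v ∈ cverts C,
              (SimpleGraph.fromEdgeSet C).Reachable u v) ∧
            (cboundary G C).ncard ≤ 2 ∧
            (cverts C).ncard * τ ≤ c₂ * Fintype.card V) ∧
          (∀ C₁ ∈ CS, ∀ C₂ ∈ CS, C₁ ≠ C₂ → C₁ ∩ C₂ = ∅) ∧
          (∀ e ∈ G.edgeSet, ∃ C ∈ CS, e ∈ C) ∧
          (∀ v : V, ∃ C ∈ CS, v ∈ cverts C) ∧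
          CS.card ≤ c₁ * τ := by
  classical
  refine ⟨4, 8, by norm_num, by norm_num, ?_⟩
  intro V _ G hG hn τ hτ1 hτn
  haveI : Fintype ↥G.edgeSet := Fintype.ofFinite _
  set n := Fintype.card V with hndef
  set s := n / τ + 1 with hsdef
  have hs : 1 ≤ s := by rw [hsdef]; exact Nat.le_add_left 1 (n / τ)
  have hNV : Nonempty V := Fintype.card_pos_iff.mp (by omega)
  obtain ⟨r⟩ := hNV
  set E₀ : Finset (Sym2 V) := G.edgeFinset with hE₀def
  have hcoe : (E₀ : Set (Sym2 V)) = G.edgeSet := G.coe_edgeFinset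
  have hPend : Pend G E₀ r := by
    refine ⟨fun e h => (SimpleGraph.mem_edgeFinset).mp h, ?_, ?_⟩
    · intro u _
      rw [hcoe, fromEdgeSet_edgeSet]
      exact hG.isConnected.preconnected u r
    · intro v _ _ w hadj
      exact (SimpleGraph.mem_edgeFinset).mpr ((G.mem_edgeSet).mpr hadj)
  obtain ⟨CS₀, R, res⟩ := rec_main hG hs E₀.card E₀ r le_rfl hPend
  set CS' : Finset (Finset (Sym2 V)) := if R = ∅ then CS₀ else insert R CS₀ with hCS'def
  have hchar : ∀ C ∈ CS', C ∈ CS₀ ∨ (C = R ∧ R ≠ ∅) := by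
    intro C hC
    rw [hCS'def] at hC
    split_ifs at hC with h
    · exact Or.inl hC
    · rcases Finset.mem_insert.mp hC with h' | h'
      exacts [Or.inr ⟨h', h⟩, Or.inl h']
  have hchar2 : ∀ C ∈ CS₀, C ∈ CS' := by
    intro C hC
    rw [hCS'def]
    split_ifs
    exacts [hC, Finset.mem_insert_of_mem hC]
  have hcharR : R ≠ ∅ → R ∈ CS' := by
    intro h
    rw [hCS'def, if_neg h]
    exact Finset.mem_insert_self _ _
  have hcard' : CS'.card ≤ CS₀.card + 1 := by
    rw [hCS'def]
    split_ifs
    · exact Nat.le_succ _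
    · exact Finset.card_insert_le _ _
  have hRbnd2 : ∃ x y, ∀ v ∈ cverts (R : Set (Sym2 V)), v ≠ x → v ≠ y → ACl G R v := by
    rcases res.flag with hf | ⟨hp, _⟩
    · obtain ⟨x, hx⟩ := res.Rbnd
      refine ⟨x, x, ?_⟩
      intro v hv hvx _
      by_cases hvr : v = r
      · subst hvr
        intro w hadj
        have hmem : s(v, w) ∈ E₀ := (SimpleGraph.mem_edgeFinset).mpr ((G.mem_edgeSet).mpr hadj)
        exact ⟨s(v,w), by exact_mod_cast hf w hadj hmem, by simp⟩
      · exact hx v hv hvr hvx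
    · exact ⟨r, r, fun v hv hvr _ => hp v hv hvr⟩
  have hprops : ∀ C ∈ CS', C.Nonempty ∧ C ⊆ E₀ ∧ C.card ≤ 2 * s ∧
      (∀ u ∈ cverts (C : Set (Sym2 V)), ∀ w ∈ cverts (C : Set (Sym2 V)),
        (fromEdgeSet (C : Set (Sym2 V))).Reachable u w) ∧
      ∃ x y, ∀ v ∈ cverts (C : Set (Sym2 V)), v ≠ x → v ≠ y → ACl G C v := by
    intro C hC
    rcases hchar C hC with h | ⟨rfl, hR⟩
    · exact ⟨res.clNe C h, res.CsubE C h, res.clCard C h, res.clConn C h, res.clBnd C h⟩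
    · refine ⟨Finset.nonempty_iff_ne_empty.mpr hR, res.RsubE, by have := res.Rcard; omega,
        ?_, hRbnd2⟩
      intro u hu w hw
      exact (res.Rconn u hu).trans (res.Rconn w hw).symm
  have hdisj' : ∀ C₁ ∈ CS', ∀ C₂ ∈ CS', C₁ ≠ C₂ → Disjoint C₁ C₂ := by
    intro C₁ h₁ C₂ h₂ hne12
    rcases hchar C₁ h₁ with h1 | ⟨e1, -⟩ <;> rcases hchar C₂ h₂ with h2 | ⟨e2, -⟩
    · exact res.disjC _ h1 _ h2 hne12
    · rw [e2]; exact res.disjR _ h1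
    · rw [e1]; exact (res.disjR _ h2).symm
    · rw [e1, e2] at hne12; exact absurd rfl hne12
  have hcover' : ∀ e ∈ E₀, ∃ C ∈ CS', e ∈ C := by
    intro e h
    rcases res.cover e h with h1 | ⟨C, hC, hm⟩
    · have hR : R ≠ ∅ := by
        intro h0
        rw [h0] at h1
        exact absurd h1 (Finset.notMem_empty e)
      exact ⟨R, hcharR hR, h1⟩
    · exact ⟨C, hchar2 C hC, hm⟩
  -- counting
  have hme : E₀.card + 1 = n := hG.card_edgeFinset
  have hcount : CS'.card ≤ 4 * τ := by
    rcases res.cnt with h0 | hle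
    · rw [hCS'def]
      split_ifs
      · rw [h0]; simp
      · rw [h0]; simp; omega
    · set B := (CS₀.filter (fun C => s ≤ C.card)).card with hBdef
      have hsum1 : B • s ≤ ∑ C ∈ CS₀.filter (fun C => s ≤ C.card), C.card :=
        Finset.card_nsmul_le_sum _ _ _ (fun C hC => (Finset.mem_filter.mp hC).2)
      have hsum2 : ∑ C ∈ CS₀.filter (fun C => s ≤ C.card), C.card ≤ ∑ C ∈ CS₀, C.card :=
        Finset.sum_le_sum_of_subset (Finset.filter_subset _ _)
      have hsum3 : ∑ C ∈ CS₀, C.card ≤ E₀.card := by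
        have hbu : (CS₀.biUnion id).card = ∑ C ∈ CS₀, C.card :=
          Finset.card_biUnion (fun x hx y hy hxy => res.disjC x hx y hy hxy)
        rw [← hbu]
        exact Finset.card_le_card (Finset.biUnion_subset.mpr (fun C hC => res.CsubE C hC))
      have hBs : B * s ≤ n - 1 := by
        have := hsum1.trans (hsum2.trans hsum3)
        rw [smul_eq_mul] at this
        omega
      have hτs : n + 1 ≤ τ * s := by
        have hdm := Nat.div_add_mod n τ
        have hmlt : n % τ < τ := Nat.mod_lt n (by omega)
        have : τ * s = τ * (n / τ) + τ := by rw [hsdef]; ring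
        omega
      have hBτ : B < τ := by
        by_contra hc
        push_neg at hc
        have := Nat.mul_le_mul_right s hc
        omega
      omega
  refine ⟨CS'.image (fun (C : Finset (Sym2 V)) => (C : Set (Sym2 V))), ?_, ?_, ?_, ?_, ?_⟩
  · intro C hC
    obtain ⟨F, hF, rfl⟩ := Finset.mem_image.mp hC
    obtain ⟨hne, hsub, hcard, hconn, x, y, hbnd⟩ := hprops F hF
    refine ⟨?_, ?_, hconn, ?_, ?_⟩
    · intro e he
      rw [← hcoe]
      exact_mod_cast hsub (by exact_mod_cast he)
    · obtain ⟨e, he⟩ := hne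
      exact ⟨e, by exact_mod_cast he⟩
    · have hss : cboundary G (F : Set (Sym2 V)) ⊆ {x, y} := by
        rintro v ⟨hvc, w, hadj, hw⟩
        by_cases hvx : v = x
        · exact Or.inl hvx
        by_cases hvy : v = y
        · exact Or.inr hvy
        · exact absurd (hbnd v hvc hvx hvy w hadj) hw
      calc (cboundary G (F : Set (Sym2 V))).ncard
          ≤ ({x, y} : Set V).ncard := Set.ncard_le_ncard hss (Set.toFinite _)
        _ ≤ ({y} : Set V).ncard + 1 := Set.ncard_insert_le _ _
        _ ≤ 2 := by simp [Set.ncard_singleton]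
    · have h1 : (cverts (F : Set (Sym2 V))).ncard ≤ 4 * s := by
        have := cverts_ncard_le F
        omega
      have h2 : 4 * s * τ ≤ 8 * n := by
        have hd : n / τ * τ ≤ n := Nat.div_mul_le_self n τ
        have he4 : 4 * s * τ = 4 * (n / τ * τ) + 4 * τ := by rw [hsdef]; ring
        omega
      calc (cverts (F : Set (Sym2 V))).ncard * τ ≤ 4 * s * τ :=
            Nat.mul_le_mul_right τ h1
        _ ≤ 8 * n := h2
  · intro C₁ hC₁ C₂ hC₂ hne12
    obtain ⟨F₁, hF₁, rfl⟩ := Finset.mem_image.mp hC₁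
    obtain ⟨F₂, hF₂, rfl⟩ := Finset.mem_image.mp hC₂
    have hFne : F₁ ≠ F₂ := fun h => hne12 (by rw [h])
    have := hdisj' F₁ hF₁ F₂ hF₂ hFne
    rw [← Finset.coe_inter, Finset.disjoint_iff_inter_eq_empty.mp this, Finset.coe_empty]
  · intro e he
    have heE : e ∈ E₀ := by
      rw [hE₀def]
      exact (SimpleGraph.mem_edgeFinset).mpr he
    obtain ⟨C, hC, hm⟩ := hcover' e heE
    exact ⟨(C : Set (Sym2 V)), Finset.mem_image_of_mem _ hC, by exact_mod_cast hm⟩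
  · intro v
    obtain ⟨u, hu⟩ := Fintype.exists_ne_of_one_lt_card hn v
    obtain ⟨p⟩ := hG.isConnected.preconnected v u
    have hadj : ∃ w, G.Adj v w := by
      cases p with
      | nil => exact absurd rfl hu.symm
      | @cons _ w _ h q => exact ⟨w, h⟩
    obtain ⟨w, hadj⟩ := hadj
    have hmem : s(v, w) ∈ E₀ := (SimpleGraph.mem_edgeFinset).mpr ((G.mem_edgeSet).mpr hadj)
    obtain ⟨C, hC, hm⟩ := hcover' _ hmem
    exact ⟨(C : Set (Sym2 V)), Finset.mem_image_of_mem _ hC,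
      ⟨s(v,w), by exact_mod_cast hm, by simp⟩⟩
  · calc (CS'.image (fun (C : Finset (Sym2 V)) => (C : Set (Sym2 V)))).card ≤ CS'.card :=
        Finset.card_image_le
      _ ≤ 4 * τ := hcount
end
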